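/- arXiv:1305.4990 — 3 statements merged into one kernel-verified Lean document; each statement's English description precedes it below -/
import Mathlib

section
/- Let A1, A2, A3 ∈ 𝔹 be pairwise distinct and not collinear in ℝⁿ. Define m1 = (γ12 + γ13 − γ23 − 1)(γ23 − 1), m2 = (γ12 − γ13 + γ23 − 1)(γ13 − 1), m3 = (−γ12 + γ13 + γ23 − 1)(γ12 − 1), assume D := m1·γ_{A1} + m2·γ_{A2} + m3·γ_{A3} ≠ 0, and let O = (m1·γ_{A1}·A1 + m2·γ_{A2}·A2 + m3·γ_{A3}·A3)/D (a point of ℝⁿ, not a priori in 𝔹). Set D3 = 1 + 2γ12γ13γ23 − γ12² − γ13² − γ23² and H3 = 2(γ12 − 1)(γ13 − 1)(γ23 − 1). Then ‖O‖ < s if and only if D3 > H3, equivalently if and only if (γ12 + γ13 + γ23 − 1)² > 2(γ12² + γ13² + γ23² − 1) (the circumgyrocircle existence condition). -/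
/-!
Lift a point `A` of the ball to `V_A = (γ_A, γ_A A / s)` on the unit hyperboloid of Minkowski
space. The identity `γ_{⊖A ⊕ C} = γ_A γ_C (1 - ⟪A, C⟫ / s²)` says that the Minkowski product of
two lifts is the gamma factor of their gyrodistance, so the lifts of `A1, A2, A3` have Gram matrix
`G = [[1, γ12, γ13], [γ12, 1, γ23], [γ13, γ23, 1]]`, whose determinant is `D3`.
The point `O` is the central projection of `X = ∑ mᵢ V_{Aᵢ}` to the ball, so `‖O‖ < s` iff `X` is
timelike, i.e. iff `mᵀ G m > 0`, and `mᵀ G m = D3 (D3 - H3)` is a polynomial identity.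
Finally `D3 > 0`: the Minkowski complement of the timelike `V_{A1}` is spacelike, and the lifts of
non-collinear points are linearly independent, so `G` has signature `(1, 2)`.
-/

open RealInnerProductSpace

/-- Lorentz gamma factor of a vector `v` in the `s`-ball of `ℝⁿ`. -/
noncomputable def egamma {n : ℕ} (s : ℝ) (v : EuclideanSpace ℝ (Fin n)) : ℝ :=
  1 / Real.sqrt (1 - ‖v‖ ^ 2 / s ^ 2)

/-- Einstein addition on the `s`-ball of `ℝⁿ`. -/
noncomputable def eadd {n : ℕ} (s : ℝ) (u v : EuclideanSpace ℝ (Fin n)) :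
    EuclideanSpace ℝ (Fin n) :=
  (1 / (1 + ⟪u, v⟫ / s ^ 2)) •
    (u + (1 / egamma s u) • v + (egamma s u / (s ^ 2 * (1 + egamma s u))) • ⟪u, v⟫ • u)

/-- Gyroangle at vertex `X` between points `Y` and `Z`. -/
noncomputable def gyroangle {n : ℕ} (s : ℝ) (X Y Z : EuclideanSpace ℝ (Fin n)) : ℝ :=
  Real.arccos ⟪‖eadd s (-X) Y‖⁻¹ • eadd s (-X) Y, ‖eadd s (-X) Z‖⁻¹ • eadd s (-X) Z⟫

/-- Gamma factor of a real gyrodistance `d`. -/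
noncomputable def gammaR (s d : ℝ) : ℝ := 1 / Real.sqrt (1 - d ^ 2 / s ^ 2)

section

variable {n : ℕ} {s : ℝ} {u v : EuclideanSpace ℝ (Fin n)}

lemma one_sub_norm_sq_div_sq_pos (hv : ‖v‖ < s) : 0 < 1 - ‖v‖ ^ 2 / s ^ 2 := by
  have hs : 0 < s := (norm_nonneg v).trans_lt hv
  rw [sub_pos, div_lt_one (by positivity)]
  exact pow_lt_pow_left₀ hv (norm_nonneg v) two_ne_zero

lemma egamma_pos (hv : ‖v‖ < s) : 0 < egamma s v := by
  have := one_sub_norm_sq_div_sq_pos hv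
  unfold egamma
  positivity

lemma egamma_sq_mul_one_sub (hv : ‖v‖ < s) :
    egamma s v ^ 2 * (1 - ‖v‖ ^ 2 / s ^ 2) = 1 := by
  have h := one_sub_norm_sq_div_sq_pos hv
  rw [egamma, div_pow, one_pow, Real.sq_sqrt h.le, one_div_mul_cancel h.ne']

lemma egamma_eq_of_sq_mul_one_sub {x : ℝ} (hx : 0 < x)
    (h : x ^ 2 * (1 - ‖v‖ ^ 2 / s ^ 2) = 1) : egamma s v = x := by
  have hsq : 1 - ‖v‖ ^ 2 / s ^ 2 = x⁻¹ ^ 2 := by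
    rw [inv_pow]; exact eq_inv_of_mul_eq_one_left (by rw [mul_comm, h])
  rw [egamma, hsq, Real.sqrt_sq (by positivity), one_div, inv_inv]

lemma egamma_neg (v : EuclideanSpace ℝ (Fin n)) : egamma s (-v) = egamma s v := by
  rw [egamma, egamma, norm_neg]

lemma egamma_sq_mul_norm_sq (hv : ‖v‖ < s) :
    egamma s v ^ 2 * ‖v‖ ^ 2 = s ^ 2 * (egamma s v ^ 2 - 1) := by
  have hs : 0 < s := (norm_nonneg v).trans_lt hv
  have h := egamma_sq_mul_one_sub hv
  field_simp at h
  linear_combination -h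

lemma eadd_neg_left (u v : EuclideanSpace ℝ (Fin n)) :
    eadd s (-u) v = (1 - ⟪u, v⟫ / s ^ 2)⁻¹ •
      ((egamma s u * ⟪u, v⟫ / (s ^ 2 * (1 + egamma s u)) - 1) • u + (egamma s u)⁻¹ • v) := by
  rw [eadd, egamma_neg, inner_neg_left, one_div, one_div, neg_div, ← sub_eq_add_neg]
  congr 1
  module

theorem egamma_eadd_neg (hu : ‖u‖ < s) (hv : ‖v‖ < s) :
    egamma s (eadd s (-u) v) = egamma s u * egamma s v * (1 - ⟪u, v⟫ / s ^ 2) := by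
  have hs : 0 < s := (norm_nonneg u).trans_lt hu
  set γ := egamma s u
  set δ := egamma s v
  set p := ⟪u, v⟫
  have hγ : 0 < γ := egamma_pos hu
  have hδ : 0 < δ := egamma_pos hv
  have hp : p < s ^ 2 := by
    calc p ≤ ‖u‖ * ‖v‖ := real_inner_le_norm u v
      _ < s * s := mul_lt_mul'' hu hv (norm_nonneg u) (norm_nonneg v)
      _ = s ^ 2 := (sq s).symm
  have ht : 0 < 1 - p / s ^ 2 := by rw [sub_pos, div_lt_one (by positivity)]; exact hp
  have hnorm : ‖eadd s (-u) v‖ ^ 2 = (1 - p / s ^ 2)⁻¹ ^ 2 *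
      ((γ * p / (s ^ 2 * (1 + γ)) - 1) ^ 2 * ‖u‖ ^ 2
        + 2 * ((γ * p / (s ^ 2 * (1 + γ)) - 1) * γ⁻¹) * p + γ⁻¹ ^ 2 * ‖v‖ ^ 2) := by
    rw [eadd_neg_left, norm_smul, mul_pow, norm_add_sq_real, norm_smul, norm_smul,
      real_inner_smul_left, real_inner_smul_right, Real.norm_eq_abs, Real.norm_eq_abs,
      Real.norm_eq_abs, sq_abs, mul_pow, mul_pow, sq_abs, sq_abs]
    ring
  have hu2 : ‖u‖ ^ 2 = s ^ 2 * (γ ^ 2 - 1) / γ ^ 2 := by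
    rw [eq_div_iff (by positivity), mul_comm]; exact egamma_sq_mul_norm_sq hu
  have hv2 : ‖v‖ ^ 2 = s ^ 2 * (δ ^ 2 - 1) / δ ^ 2 := by
    rw [eq_div_iff (by positivity), mul_comm]; exact egamma_sq_mul_norm_sq hv
  refine egamma_eq_of_sq_mul_one_sub (x := γ * δ * (1 - p / s ^ 2)) (by positivity) ?_
  rw [hnorm, hu2, hv2]
  have hsp : s ^ 2 - p ≠ 0 := (sub_pos.mpr hp).ne'
  rw [show 1 - p / s ^ 2 = (s ^ 2 - p) / s ^ 2 by field_simp]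
  field_simp
  ring

lemma egamma_eadd_neg_self (hu : ‖u‖ < s) : egamma s (eadd s (-u) u) = 1 := by
  rw [egamma_eadd_neg hu hu, real_inner_self_eq_norm_sq, ← sq,
    egamma_sq_mul_one_sub hu]

lemma egamma_eadd_neg_comm (hu : ‖u‖ < s) (hv : ‖v‖ < s) :
    egamma s (eadd s (-u) v) = egamma s (eadd s (-v) u) := by
  rw [egamma_eadd_neg hu hv, egamma_eadd_neg hv hu, real_inner_comm, mul_comm (egamma s u)]

end

section

variable {n : ℕ} {s : ℝ} {ι : Type*} [Fintype ι]

theorem lorentz_gram {A : ι → EuclideanSpace ℝ (Fin n)} (hA : ∀ i, ‖A i‖ < s) (c d : ι → ℝ) :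
    s ^ 2 * ((∑ i, c i * egamma s (A i)) * ∑ j, d j * egamma s (A j))
      - ⟪∑ i, (c i * egamma s (A i)) • A i, ∑ j, (d j * egamma s (A j)) • A j⟫
      = s ^ 2 * ∑ i, ∑ j, c i * d j * egamma s (eadd s (-A i) (A j)) := by
  rw [Finset.sum_mul_sum, sum_inner]
  simp only [inner_sum, Finset.mul_sum, ← Finset.sum_sub_distrib, real_inner_smul_left,
    real_inner_smul_right]
  refine Finset.sum_congr rfl fun i _ ↦ Finset.sum_congr rfl fun j _ ↦ ?_
  have hs : s ≠ 0 := ((norm_nonneg _).trans_lt (hA i)).ne'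
  rw [egamma_eadd_neg (hA i) (hA j)]
  field_simp

theorem lorentz_form_neg_of_orthogonal {A : ι → EuclideanSpace ℝ (Fin n)}
    (hind : AffineIndependent ℝ A) (hA : ∀ i, ‖A i‖ < s) (k : ι) {c : ι → ℝ} (hc : c ≠ 0)
    (horth : ∑ i, c i * egamma s (eadd s (-A i) (A k)) = 0) :
    ∑ i, ∑ j, c i * c j * egamma s (eadd s (-A i) (A j)) < 0 := by
  have hs : 0 < s := (norm_nonneg _).trans_lt (hA k)
  have hgk : 0 < egamma s (A k) := egamma_pos (hA k)
  classical
  have hbil := lorentz_gram hA c (Pi.single k 1)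
  simp only [Pi.single_apply, ite_mul, one_mul, zero_mul, mul_ite, mul_one, mul_zero,
    Finset.sum_ite_eq', Finset.mem_univ, if_true, ite_smul, zero_smul, horth,
    real_inner_smul_right] at hbil
  set t := ∑ i, c i * egamma s (A i)
  set X := ∑ i, (c i * egamma s (A i)) • A i
  replace hbil : s ^ 2 * t = ⟪X, A k⟫ := by
    have : egamma s (A k) * (s ^ 2 * t - ⟪X, A k⟫) = 0 := by linear_combination hbil
    exact sub_eq_zero.mp ((mul_eq_zero.mp this).resolve_left hgk.ne')
  have hX : X ≠ 0 := by
    intro hX0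
    have ht : t = 0 := by
      rw [hX0, inner_zero_left] at hbil
      exact (mul_eq_zero.mp hbil).resolve_left (by positivity)
    refine hc (funext fun i ↦ ?_)
    have := hind.eq_zero_of_sum_eq_zero (s := Finset.univ) ht hX0 i (Finset.mem_univ i)
    exact (mul_eq_zero.mp this).resolve_right (egamma_pos (hA i)).ne'
  have hCS : ⟪X, A k⟫ ^ 2 < s ^ 2 * ‖X‖ ^ 2 := by
    calc ⟪X, A k⟫ ^ 2 ≤ (‖X‖ * ‖A k‖) ^ 2 := by
          rw [← sq_abs]; gcongr; exact abs_real_inner_le_norm X (A k)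
      _ < (‖X‖ * s) ^ 2 := by gcongr; exact hA k
      _ = s ^ 2 * ‖X‖ ^ 2 := by ring
  have hquad := lorentz_gram hA c c
  rw [real_inner_self_eq_norm_sq] at hquad
  have hform : s ^ 2 * (s ^ 2 * ∑ i, ∑ j, c i * c j * egamma s (eadd s (-A i) (A j)))
      = ⟪X, A k⟫ ^ 2 - s ^ 2 * ‖X‖ ^ 2 := by
    rw [← hquad, ← hbil]; ring
  nlinarith [pow_pos hs 2, pow_pos hs 4]

end

section

variable {n : ℕ} {s : ℝ} {A1 A2 A3 : EuclideanSpace ℝ (Fin n)}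

lemma norm_vecCons_lt (hA1 : ‖A1‖ < s) (hA2 : ‖A2‖ < s) (hA3 : ‖A3‖ < s) :
    ∀ i, ‖![A1, A2, A3] i‖ < s := by
  simp [Fin.forall_fin_succ, hA1, hA2, hA3]

lemma lorentz_form_fin_three (hA1 : ‖A1‖ < s) (hA2 : ‖A2‖ < s) (hA3 : ‖A3‖ < s) (x y z : ℝ) :
    ∑ i, ∑ j, ![x, y, z] i * ![x, y, z] j
        * egamma s (eadd s (-![A1, A2, A3] i) (![A1, A2, A3] j))
      = x ^ 2 + y ^ 2 + z ^ 2 + 2 * x * y * egamma s (eadd s (-A1) A2)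
        + 2 * x * z * egamma s (eadd s (-A1) A3) + 2 * y * z * egamma s (eadd s (-A2) A3) := by
  simp only [Fin.sum_univ_three, Matrix.cons_val_zero, Matrix.cons_val_one, Matrix.cons_val_two,
    Matrix.head_cons, Matrix.tail_cons, egamma_eadd_neg_self hA1, egamma_eadd_neg_self hA2,
    egamma_eadd_neg_self hA3, egamma_eadd_neg_comm hA2 hA1, egamma_eadd_neg_comm hA3 hA1,
    egamma_eadd_neg_comm hA3 hA2]
  ring

lemma lorentz_gram_fin_three (hA1 : ‖A1‖ < s) (hA2 : ‖A2‖ < s) (hA3 : ‖A3‖ < s) (x y z : ℝ) :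
    s ^ 2 * (x * egamma s A1 + y * egamma s A2 + z * egamma s A3) ^ 2
      - ‖(x * egamma s A1) • A1 + (y * egamma s A2) • A2 + (z * egamma s A3) • A3‖ ^ 2
      = s ^ 2 * (x ^ 2 + y ^ 2 + z ^ 2 + 2 * x * y * egamma s (eadd s (-A1) A2)
        + 2 * x * z * egamma s (eadd s (-A1) A3) + 2 * y * z * egamma s (eadd s (-A2) A3)) := by
  have h := lorentz_gram (norm_vecCons_lt hA1 hA2 hA3) ![x, y, z] ![x, y, z]
  rw [lorentz_form_fin_three hA1 hA2 hA3] at h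
  simpa only [Fin.sum_univ_three, Matrix.cons_val_zero, Matrix.cons_val_one, Matrix.cons_val_two,
    Matrix.head_cons, Matrix.tail_cons, ← sq, real_inner_self_eq_norm_sq] using h

theorem lorentz_gram_det_pos (hA1 : ‖A1‖ < s) (hA2 : ‖A2‖ < s) (hA3 : ‖A3‖ < s)
    (hncol : ¬ Collinear ℝ ({A1, A2, A3} : Set (EuclideanSpace ℝ (Fin n)))) :
    0 < 1 + 2 * egamma s (eadd s (-A1) A2) * egamma s (eadd s (-A1) A3)
          * egamma s (eadd s (-A2) A3)
      - egamma s (eadd s (-A1) A2) ^ 2 - egamma s (eadd s (-A1) A3) ^ 2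
      - egamma s (eadd s (-A2) A3) ^ 2 := by
  have hind : AffineIndependent ℝ ![A1, A2, A3] :=
    affineIndependent_iff_not_collinear_set.mpr hncol
  set γ12 := egamma s (eadd s (-A1) A2)
  set γ13 := egamma s (eadd s (-A1) A3)
  set γ23 := egamma s (eadd s (-A2) A3)
  -- `-cᵀ G c` for the `c` with `∑ cᵢ V_{Aᵢ}` orthogonal to `V_{A1}`; its discriminant is `-4 D3`.
  have hpos : ∀ y z, (y ≠ 0 ∨ z ≠ 0) →
      0 < (γ12 ^ 2 - 1) * y ^ 2 + 2 * (γ12 * γ13 - γ23) * y * z + (γ13 ^ 2 - 1) * z ^ 2 := by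
    intro y z hyz
    have hc : ![-(γ12 * y + γ13 * z), y, z] ≠ 0 := fun h ↦
      hyz.elim (· (congrFun h 1)) (· (congrFun h 2))
    have horth : ∑ i, ![-(γ12 * y + γ13 * z), y, z] i
        * egamma s (eadd s (-![A1, A2, A3] i) (![A1, A2, A3] 0)) = 0 := by
      simp only [Fin.sum_univ_three, Matrix.cons_val_zero, Matrix.cons_val_one, Matrix.cons_val_two,
        Matrix.head_cons, Matrix.tail_cons, egamma_eadd_neg_self hA1, egamma_eadd_neg_comm hA2 hA1,
        egamma_eadd_neg_comm hA3 hA1]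
      ring
    have hneg := lorentz_form_neg_of_orthogonal hind (norm_vecCons_lt hA1 hA2 hA3) 0 hc horth
    rw [lorentz_form_fin_three hA1 hA2 hA3] at hneg
    linear_combination hneg
  have hdisc := discrim_lt_zero (hpos 1 0 (.inl one_ne_zero)).ne'
    (b := 2 * (γ12 * γ13 - γ23)) (c := γ13 ^ 2 - 1)
    fun x ↦ by linear_combination hpos x 1 (.inr one_ne_zero)
  rw [discrim] at hdisc
  linear_combination hdisc / 4

end

lemma norm_inv_smul_lt_iff {E : Type*} [NormedAddCommGroup E] [NormedSpace ℝ E] {D s : ℝ}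
    (hD : D ≠ 0) (hs : 0 ≤ s) (x : E) : ‖D⁻¹ • x‖ < s ↔ ‖x‖ ^ 2 < s ^ 2 * D ^ 2 := by
  rw [norm_smul, norm_inv, Real.norm_eq_abs, inv_mul_lt_iff₀ (abs_pos.mpr hD),
    ← sq_lt_sq₀ (norm_nonneg x) (by positivity), mul_pow, sq_abs, mul_comm]

theorem circumgyrocircle_existence_general {n : ℕ} (s : ℝ) (hs : 0 < s)
    (A1 A2 A3 : EuclideanSpace ℝ (Fin n)) (O : EuclideanSpace ℝ (Fin n))
    (hA1 : ‖A1‖ < s) (hA2 : ‖A2‖ < s) (hA3 : ‖A3‖ < s)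
    (hncol : ¬ Collinear ℝ ({A1, A2, A3} : Set (EuclideanSpace ℝ (Fin n))))
    (γ12 γ13 γ23 m1 m2 m3 D D3 H3 : ℝ)
    (hγ12 : γ12 = egamma s (eadd s (-A1) A2))
    (hγ13 : γ13 = egamma s (eadd s (-A1) A3))
    (hγ23 : γ23 = egamma s (eadd s (-A2) A3))
    (hm1 : m1 = (γ12 + γ13 - γ23 - 1) * (γ23 - 1))
    (hm2 : m2 = (γ12 - γ13 + γ23 - 1) * (γ13 - 1))
    (hm3 : m3 = (-γ12 + γ13 + γ23 - 1) * (γ12 - 1))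
    (hD : D = m1 * egamma s A1 + m2 * egamma s A2 + m3 * egamma s A3)
    (hDne : D ≠ 0)
    (hO : O = D⁻¹ • ((m1 * egamma s A1) • A1 + (m2 * egamma s A2) • A2 +
      (m3 * egamma s A3) • A3))
    (hD3 : D3 = 1 + 2 * γ12 * γ13 * γ23 - γ12 ^ 2 - γ13 ^ 2 - γ23 ^ 2)
    (hH3 : H3 = 2 * (γ12 - 1) * (γ13 - 1) * (γ23 - 1)) :
    (‖O‖ < s ↔ D3 > H3) ∧
    (‖O‖ < s ↔ (γ12 + γ13 + γ23 - 1) ^ 2 > 2 * (γ12 ^ 2 + γ13 ^ 2 + γ23 ^ 2 - 1)) := by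
  have hD3_pos : 0 < D3 := by
    rw [hD3, hγ12, hγ13, hγ23]
    exact lorentz_gram_det_pos hA1 hA2 hA3 hncol
  have hgram := lorentz_gram_fin_three hA1 hA2 hA3 m1 m2 m3
  rw [← hD, ← hγ12, ← hγ13, ← hγ23] at hgram
  have hO_lt : ‖O‖ < s ↔ 0 < m1 ^ 2 + m2 ^ 2 + m3 ^ 2
      + 2 * m1 * m2 * γ12 + 2 * m1 * m3 * γ13 + 2 * m2 * m3 * γ23 := by
    rw [hO, norm_inv_smul_lt_iff hDne hs.le, ← sub_pos, hgram]
    exact mul_pos_iff_of_pos_left (pow_pos hs 2)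
  have hQ : m1 ^ 2 + m2 ^ 2 + m3 ^ 2 + 2 * m1 * m2 * γ12 + 2 * m1 * m3 * γ13 + 2 * m2 * m3 * γ23
      = D3 * (D3 - H3) := by
    rw [hm1, hm2, hm3, hD3, hH3]; ring
  rw [hO_lt, hQ, mul_pos_iff_of_pos_left hD3_pos, sub_pos]
  refine ⟨Iff.rfl, ?_⟩
  rw [hD3, hH3]
  constructor <;> intro h <;> linarith

/-- **Circumgyrocircle existence condition.** -/
theorem circumgyrocircle_existence {n : ℕ} (hn : 2 ≤ n) (s : ℝ) (hs : 0 < s)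
    (A1 A2 A3 : EuclideanSpace ℝ (Fin n)) (O : EuclideanSpace ℝ (Fin n))
    (hA1 : ‖A1‖ < s) (hA2 : ‖A2‖ < s) (hA3 : ‖A3‖ < s)
    (h12 : A1 ≠ A2) (h13 : A1 ≠ A3) (h23 : A2 ≠ A3)
    (hncol : ¬ Collinear ℝ ({A1, A2, A3} : Set (EuclideanSpace ℝ (Fin n))))
    (γ12 γ13 γ23 m1 m2 m3 D D3 H3 : ℝ)
    (hγ12 : γ12 = egamma s (eadd s (-A1) A2))
    (hγ13 : γ13 = egamma s (eadd s (-A1) A3))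
    (hγ23 : γ23 = egamma s (eadd s (-A2) A3))
    (hm1 : m1 = (γ12 + γ13 - γ23 - 1) * (γ23 - 1))
    (hm2 : m2 = (γ12 - γ13 + γ23 - 1) * (γ13 - 1))
    (hm3 : m3 = (-γ12 + γ13 + γ23 - 1) * (γ12 - 1))
    (hD : D = m1 * egamma s A1 + m2 * egamma s A2 + m3 * egamma s A3)
    (hDne : D ≠ 0)
    (hO : O = D⁻¹ • ((m1 * egamma s A1) • A1 + (m2 * egamma s A2) • A2 +
      (m3 * egamma s A3) • A3))
    (hD3 : D3 = 1 + 2 * γ12 * γ13 * γ23 - γ12 ^ 2 - γ13 ^ 2 - γ23 ^ 2)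
    (hH3 : H3 = 2 * (γ12 - 1) * (γ13 - 1) * (γ23 - 1)) :
    (‖O‖ < s ↔ D3 > H3) ∧
    (‖O‖ < s ↔ (γ12 + γ13 + γ23 - 1) ^ 2 > 2 * (γ12 ^ 2 + γ13 ^ 2 + γ23 ^ 2 - 1)) :=
  circumgyrocircle_existence_general s hs A1 A2 A3 O hA1 hA2 hA3 hncol γ12 γ13 γ23 m1 m2 m3 D D3 H3
    hγ12 hγ13 hγ23 hm1 hm2 hm3 hD hDne hO hD3 hH3
end

section
/- Work in the plane case n = 2. Let O ∈ 𝔹, 0 < r < s, and let C = {X ∈ 𝔹 : ‖⊖O ⊕ X‖ = r} be the gyrocircle with gyrocenter O and gyroradius r. Let L ⊆ ℝ² be an affine line such that L ∩ C = {P} consists of exactly one point (L is a gyrotangent gyroline of C with tangency point P). Then for every T ∈ L ∩ 𝔹 with T ≠ P one has ⟨⊖P ⊕ O, ⊖P ⊕ T⟩ = 0; that is, the gyrotangent gyroline is perpendicular to the gyroradius OP at the point of tangency. -/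
open RealInnerProductSpace

lemma egamma_pos_s12 {n : ℕ} {s : ℝ} (hs : 0 < s) {u : EuclideanSpace ℝ (Fin n)}
    (hu : ‖u‖ < s) : 0 < egamma s u := by
  have h1 : 0 < 1 - ‖u‖ ^ 2 / s ^ 2 := by
    have : ‖u‖ ^ 2 < s ^ 2 := by nlinarith [norm_nonneg u]
    have hs2 : 0 < s ^ 2 := by positivity
    rw [sub_pos, div_lt_one hs2]; exact this
  unfold egamma
  positivity

lemma egamma_sq {n : ℕ} {s : ℝ} (hs : 0 < s) {u : EuclideanSpace ℝ (Fin n)}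
    (hu : ‖u‖ < s) : (egamma s u) ^ 2 * (s ^ 2 - ‖u‖ ^ 2) = s ^ 2 := by
  have h1 : 0 < 1 - ‖u‖ ^ 2 / s ^ 2 := by
    have : ‖u‖ ^ 2 < s ^ 2 := by nlinarith [norm_nonneg u]
    have hs2 : 0 < s ^ 2 := by positivity
    rw [sub_pos, div_lt_one hs2]; exact this
  have hs2 : (s:ℝ) ^ 2 ≠ 0 := by positivity
  unfold egamma
  rw [div_pow, one_pow, Real.sq_sqrt h1.le]
  have h2 : s ^ 2 - ‖u‖ ^ 2 ≠ 0 := by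
    intro h
    rw [show (1:ℝ) - ‖u‖^2/s^2 = (s^2-‖u‖^2)/s^2 by field_simp] at h1
    rw [h] at h1; simp at h1
  field_simp

lemma inner_lt {n : ℕ} {s : ℝ} (hs : 0 < s) {u v : EuclideanSpace ℝ (Fin n)}
    (hu : ‖u‖ < s) (hv : ‖v‖ < s) : |⟪u, v⟫| < s ^ 2 := by
  calc |⟪u, v⟫| ≤ ‖u‖ * ‖v‖ := abs_real_inner_le_norm u v
    _ < s ^ 2 := by nlinarith [norm_nonneg u, norm_nonneg v]

lemma norm_eadd_sq {n : ℕ} {s : ℝ} (hs : 0 < s) {u v : EuclideanSpace ℝ (Fin n)}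
    (hu : ‖u‖ < s) (hv : ‖v‖ < s) :
    ‖eadd s u v‖ ^ 2 =
      s ^ 2 - s ^ 2 * (s ^ 2 - ‖u‖ ^ 2) * (s ^ 2 - ‖v‖ ^ 2) / (s ^ 2 + ⟪u, v⟫) ^ 2 := by
  have hg : 0 < egamma s u := egamma_pos_s12 hs hu
  have hg2 : (egamma s u) ^ 2 * (s ^ 2 - ‖u‖ ^ 2) = s ^ 2 := egamma_sq hs hu
  have ha : |⟪u, v⟫| < s ^ 2 := inner_lt hs hu hv
  have hs2 : (0:ℝ) < s ^ 2 := by positivity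
  have hden : s ^ 2 + ⟪u, v⟫ ≠ 0 := by cases abs_lt.mp ha; intro h; linarith
  have hden2 : 1 + ⟪u, v⟫ / s ^ 2 ≠ 0 := by
    intro h
    apply hden
    have : ⟪u, v⟫ / s ^ 2 = -1 := by linarith
    have := (div_eq_iff (ne_of_gt hs2)).mp this
    linarith
  have hg0 : egamma s u ≠ 0 := ne_of_gt hg
  have h1g : 1 + egamma s u ≠ 0 := by positivity
  have hnu : ‖u‖ ^ 2 = s ^ 2 - s ^ 2 / (egamma s u) ^ 2 := by
    have hd : s ^ 2 - ‖u‖ ^ 2 ≠ 0 := by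
      intro h; rw [h, mul_zero] at hg2; exact (ne_of_gt hs2) hg2.symm
    field_simp
    linarith [hg2]
  have hAu : ⟪u, u⟫ = s ^ 2 - s ^ 2 / (egamma s u) ^ 2 := by
    rw [real_inner_self_eq_norm_sq]; exact hnu
  rw [← real_inner_self_eq_norm_sq (eadd s u v), hnu]
  unfold eadd
  simp only [inner_add_left, inner_add_right, real_inner_smul_left, real_inner_smul_right,
    real_inner_comm v u]
  rw [hAu, show ⟪v, v⟫ = ‖v‖ ^ 2 from real_inner_self_eq_norm_sq v]
  have hs0 : s ≠ 0 := ne_of_gt hs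
  set g := egamma s u with hgdef
  have hden' : s ^ 2 + ⟪v, u⟫ ≠ 0 := by rwa [real_inner_comm]
  have hden2' : 1 + ⟪v, u⟫ / s ^ 2 ≠ 0 := by rwa [real_inner_comm]
  set a : ℝ := ⟪v, u⟫ with hadef
  set B : ℝ := ‖v‖ ^ 2 with hBdef
  clear_value g a B
  field_simp
  ring

lemma circle_iff {n : ℕ} {s r : ℝ} (hs : 0 < s) (hr : 0 < r)
    {O X : EuclideanSpace ℝ (Fin n)} (hO : ‖O‖ < s) (hX : ‖X‖ < s) :
    ‖eadd s (-O) X‖ = r ↔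
      (s ^ 2 - r ^ 2) * (s ^ 2 - ⟪O, X⟫) ^ 2 =
        s ^ 2 * (s ^ 2 - ‖O‖ ^ 2) * (s ^ 2 - ‖X‖ ^ 2) := by
  have hO' : ‖-O‖ < s := by rwa [norm_neg]
  have hn := norm_eadd_sq hs hO' hX
  rw [norm_neg, inner_neg_left] at hn
  rw [show s ^ 2 + -⟪O, X⟫ = s ^ 2 - ⟪O, X⟫ by ring] at hn
  have hd : s ^ 2 - ⟪O, X⟫ ≠ 0 := by
    have := inner_lt hs hO hX
    cases abs_lt.mp this; intro h; linarith
  have hD : (s ^ 2 - ⟪O, X⟫) ^ 2 ≠ 0 := pow_ne_zero _ hd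
  have key : ‖eadd s (-O) X‖ ^ 2 = r ^ 2 ↔
      (s ^ 2 - r ^ 2) * (s ^ 2 - ⟪O, X⟫) ^ 2 =
        s ^ 2 * (s ^ 2 - ‖O‖ ^ 2) * (s ^ 2 - ‖X‖ ^ 2) := by
    rw [hn]
    constructor
    · intro h
      have h2 : s ^ 2 - r ^ 2 =
          s ^ 2 * (s ^ 2 - ‖O‖ ^ 2) * (s ^ 2 - ‖X‖ ^ 2) / (s ^ 2 - ⟪O, X⟫) ^ 2 := by
        linarith
      exact (eq_div_iff hD).mp h2
    · intro h
      have h2 : s ^ 2 - r ^ 2 =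
          s ^ 2 * (s ^ 2 - ‖O‖ ^ 2) * (s ^ 2 - ‖X‖ ^ 2) / (s ^ 2 - ⟪O, X⟫) ^ 2 :=
        (eq_div_iff hD).mpr h
      linarith
  constructor
  · intro h; exact key.mp (by rw [h])
  · intro h
    have h2 := key.mpr h
    nlinarith [norm_nonneg (eadd s (-O) X)]

private lemma scalar1 {s r AO AP x1 x2 x3 : ℝ}
    (hPe : (s^2-r^2)*(s^2-x1)^2 = s^2*(s^2-AO)*(s^2-AP))
    (hkey : s^2*(s^2-AO)*x2 = (s^2-r^2)*(s^2-x1)*x3) :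
    (x3*(s^2-AP) + x2*(x1-s^2)) * (s^2*(s^2-AO)) = 0 := by
  linear_combination (x1-s^2)*hkey - x3*hPe

private lemma scalar2 {s r AO AP Bv x1 x2 x3 u1 : ℝ}
    (hPe : (s^2-r^2)*(s^2-x1)^2 = s^2*(s^2-AO)*(s^2-AP))
    (hroot : ((s^2-r^2)*x3^2 + s^2*(s^2-AO)*Bv) * u1
      = -(2*(s^2*(s^2-AO)*x2 - (s^2-r^2)*(s^2-x1)*x3))) :
    (s^2-r^2)*(s^2-(x1+u1*x3))^2 = s^2*(s^2-AO)*(s^2-(AP+2*u1*x2+u1^2*Bv)) := by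
  linear_combination hPe + u1*hroot

lemma line_param {n : ℕ} (p v : EuclideanSpace ℝ (Fin n)) (a b : ℝ) :
    (p + a • v) + b • v = p + (a + b) • v := by
  rw [add_assoc, ← add_smul]


set_option maxHeartbeats 8000000 in
/-- **Gyrotangent gyroline is perpendicular to the gyroradius at the tangency point.** -/
theorem gyrotangent_perp_gyroradius (s : ℝ) (hs : 0 < s)
    (O : EuclideanSpace ℝ (Fin 2)) (hO : ‖O‖ < s)
    (r : ℝ) (hrpos : 0 < r) (hrs : r < s)
    (C L : Set (EuclideanSpace ℝ (Fin 2))) (P : EuclideanSpace ℝ (Fin 2))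
    (hC : C = {X : EuclideanSpace ℝ (Fin 2) | ‖X‖ < s ∧ ‖eadd s (-O) X‖ = r})
    (hL : ∃ p v : EuclideanSpace ℝ (Fin 2), v ≠ 0 ∧
      L = {x : EuclideanSpace ℝ (Fin 2) | ∃ t : ℝ, x = p + t • v})
    (htan : L ∩ C = {P}) :
    ∀ T ∈ L, ‖T‖ < s → T ≠ P → ⟪eadd s (-P) O, eadd s (-P) T⟫ = 0 := by
  intro T hTL hTs hTP
  obtain ⟨p, v, hv0, hLdef⟩ := hL
  have hPmem : P ∈ L ∩ C := by rw [htan]; rfl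
  obtain ⟨hPL, hPC⟩ := hPmem
  rw [hC] at hPC
  obtain ⟨hPs, hPr⟩ := hPC
  rw [hLdef] at hPL hTL
  obtain ⟨t0, hP⟩ := hPL
  obtain ⟨t1, hT1⟩ := hTL
  set τ := t1 - t0 with hτdef
  have hTparam : T = P + τ • v := by
    rw [hT1, hP, hτdef, line_param, show t0 + (t1 - t0) = t1 by ring]
  have hτ0 : τ ≠ 0 := by
    intro h; exact hTP (by rw [hTparam, h, zero_smul, add_zero])
  have hs2 : (0:ℝ) < s ^ 2 := by positivity
  have hOpos : 0 < s ^ 2 - ‖O‖ ^ 2 := by nlinarith [norm_nonneg O]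
  have hsr : 0 < s ^ 2 - r ^ 2 := by nlinarith
  have hPe : (s ^ 2 - r ^ 2) * (s ^ 2 - ⟪O, P⟫) ^ 2 =
      s ^ 2 * (s ^ 2 - ‖O‖ ^ 2) * (s ^ 2 - ‖P‖ ^ 2) :=
    (circle_iff hs hrpos hO hPs).mp hPr
  -- step 1: tangency gives the key linear relation
  have hkey : s ^ 2 * (s ^ 2 - ‖O‖ ^ 2) * ⟪P, v⟫ =
      (s ^ 2 - r ^ 2) * (s ^ 2 - ⟪O, P⟫) * ⟪O, v⟫ := by
    by_contra hne
    have hv2 : 0 < ‖v‖ ^ 2 := by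
      have := norm_pos_iff.mpr hv0; positivity
    set a2 : ℝ := (s ^ 2 - r ^ 2) * ⟪O, v⟫ ^ 2 + s ^ 2 * (s ^ 2 - ‖O‖ ^ 2) * ‖v‖ ^ 2 with ha2
    have ha2pos : 0 < a2 := by
      have h1 : 0 ≤ (s ^ 2 - r ^ 2) * ⟪O, v⟫ ^ 2 :=
        mul_nonneg (le_of_lt hsr) (sq_nonneg _)
      have h2 : 0 < s ^ 2 * (s ^ 2 - ‖O‖ ^ 2) * ‖v‖ ^ 2 :=
        mul_pos (mul_pos hs2 hOpos) hv2
      rw [ha2]; linarith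
    set a1 : ℝ := 2 * (s ^ 2 * (s ^ 2 - ‖O‖ ^ 2) * ⟪P, v⟫ -
      (s ^ 2 - r ^ 2) * (s ^ 2 - ⟪O, P⟫) * ⟪O, v⟫) with ha1
    have ha1ne : a1 ≠ 0 := by
      intro h; apply hne; rw [ha1] at h; linarith
    set u1 : ℝ := -a1 / a2 with hu1
    have hu10 : u1 ≠ 0 := div_ne_zero (neg_ne_zero.mpr ha1ne) (ne_of_gt ha2pos)
    have hroot : a2 * u1 = -a1 := by
      rw [hu1]; field_simp
    rw [ha1, ha2] at hroot
    set X1 : EuclideanSpace ℝ (Fin 2) := P + u1 • v with hX1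
    have hiOX1 : ⟪O, X1⟫ = ⟪O, P⟫ + u1 * ⟪O, v⟫ := by
      rw [hX1]; simp only [inner_add_right, real_inner_smul_right]
    have hnX1 : ‖X1‖ ^ 2 = ‖P‖ ^ 2 + 2 * u1 * ⟪P, v⟫ + u1 ^ 2 * ‖v‖ ^ 2 := by
      rw [hX1, norm_add_sq_real, real_inner_smul_right, norm_smul, Real.norm_eq_abs,
        mul_pow, sq_abs]
      ring
    have hQ : (s ^ 2 - r ^ 2) * (s ^ 2 - ⟪O, X1⟫) ^ 2 =
        s ^ 2 * (s ^ 2 - ‖O‖ ^ 2) * (s ^ 2 - ‖X1‖ ^ 2) := by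
      rw [hiOX1, hnX1]
      exact scalar2 hPe hroot
    have hX1s : ‖X1‖ < s := by
      by_contra hge
      push_neg at hge
      have h1 : s ^ 2 - ‖X1‖ ^ 2 ≤ 0 := by nlinarith
      have h5 : 0 < s ^ 2 * (s ^ 2 - ‖O‖ ^ 2) := mul_pos hs2 hOpos
      have hrhs : s ^ 2 * (s ^ 2 - ‖O‖ ^ 2) * (s ^ 2 - ‖X1‖ ^ 2) ≤ 0 := by
        nlinarith [mul_nonneg h5.le (neg_nonneg.mpr h1)]
      have h2 : (s ^ 2 - ⟪O, X1⟫) ^ 2 ≤ 0 := by nlinarith [hQ, hrhs, sq_nonneg (s ^ 2 - ⟪O, X1⟫)]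
      have h2' : (s ^ 2 - ⟪O, X1⟫) ^ 2 = 0 := le_antisymm h2 (sq_nonneg _)
      have h3 : ⟪O, X1⟫ = s ^ 2 := by
        have := pow_eq_zero_iff (n := 2) (by norm_num) |>.mp h2'
        linarith
      have h6 : s ^ 2 * (s ^ 2 - ‖O‖ ^ 2) * (s ^ 2 - ‖X1‖ ^ 2) = 0 := by
        rw [← hQ, h3]; ring
      have h7 : s ^ 2 - ‖X1‖ ^ 2 = 0 := by
        rcases mul_eq_zero.mp h6 with h | h
        · exact absurd h (ne_of_gt h5)
        · exact h
      have hCS : ⟪O, X1⟫ ≤ ‖O‖ * ‖X1‖ := real_inner_le_norm O X1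
      have hX1pos : 0 < ‖X1‖ := by nlinarith [norm_nonneg X1]
      nlinarith [mul_pos (sub_pos.mpr hO) hX1pos, hCS, h3, h7, sq_nonneg (‖X1‖ - s),
        norm_nonneg X1]
    have hX1mem : X1 ∈ L ∩ C := by
      constructor
      · rw [hLdef]
        exact ⟨t0 + u1, by rw [hX1, hP]; exact line_param p v t0 u1⟩
      · rw [hC]
        exact ⟨hX1s, (circle_iff hs hrpos hO hX1s).mpr hQ⟩
    rw [htan] at hX1mem
    have hX1P : X1 = P := hX1mem
    rw [hX1] at hX1P
    have h6 : u1 • v = 0 := by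
      have h7 := hX1P
      nth_rewrite 2 [← add_zero P] at h7
      exact add_left_cancel h7
    rcases smul_eq_zero.mp h6 with h | h
    · exact hu10 h
    · exact hv0 h
  -- step 2: the perpendicularity relation in scalar form
  have hEkey : ⟪O, v⟫ * (s ^ 2 - ‖P‖ ^ 2) + ⟪P, v⟫ * (⟪O, P⟫ - s ^ 2) = 0 := by
    have hKne : s ^ 2 * (s ^ 2 - ‖O‖ ^ 2) ≠ 0 := ne_of_gt (mul_pos hs2 hOpos)
    have hK : (⟪O, v⟫ * (s ^ 2 - ‖P‖ ^ 2) + ⟪P, v⟫ * (⟪O, P⟫ - s ^ 2)) *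
        (s ^ 2 * (s ^ 2 - ‖O‖ ^ 2)) = 0 := by
      exact scalar1 hPe hkey
    rcases mul_eq_zero.mp hK with h | h
    · exact h
    · exact absurd h hKne
  -- step 3: compute the inner product
  rw [hTparam]
  clear_value τ
  clear hC htan hTs hTP hv0 hLdef hPr hP hT1 hPe hkey hτ0 hτdef hrpos hrs p t0 t1
    hsr hOpos hTparam T hO r
  have hsP : s ^ 2 - ‖P‖ ^ 2 ≠ 0 := by nlinarith [norm_nonneg P]
  set g := egamma s P with hgdef
  have hgpos : 0 < g := egamma_pos_s12 hs hPs
  have hg2 : g ^ 2 * (s ^ 2 - ‖P‖ ^ 2) = s ^ 2 := egamma_sq hs hPs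
  have hgP : egamma s (-P) = g := by rw [hgdef]; unfold egamma; rw [norm_neg]
  clear_value g
  unfold eadd
  rw [hgP]
  clear hgP hgdef
  have hg0 : g ≠ 0 := ne_of_gt hgpos
  have h1g : (1:ℝ) + g ≠ 0 := by positivity
  have hs0 : s ≠ 0 := ne_of_gt hs
  have hAP : s ^ 2 / g ^ 2 = s ^ 2 - ‖P‖ ^ 2 := by
    rw [div_eq_iff (pow_ne_zero 2 hg0)]
    linear_combination -hg2
  have hPP : ⟪P, P⟫ = s ^ 2 - s ^ 2 / g ^ 2 := by
    rw [real_inner_self_eq_norm_sq, hAP]; ring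
  have hEkey2 : ⟪O, v⟫ * (s ^ 2 / g ^ 2) + ⟪P, v⟫ * (⟪P, O⟫ - s ^ 2) = 0 := by
    rw [hAP, real_inner_comm O P]; exact hEkey
  rw [real_inner_smul_left, real_inner_smul_right]
  apply mul_eq_zero_of_right
  apply mul_eq_zero_of_right
  simp only [inner_neg_left, inner_neg_right, inner_add_left, inner_add_right,
    real_inner_smul_left, real_inner_smul_right, inner_neg_neg]
  simp only [real_inner_comm P O]
  rw [hPP]
  set iPO : ℝ := ⟪P, O⟫ with hiPO
  set iPv : ℝ := ⟪P, v⟫ with hiPv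
  set iOv : ℝ := ⟪O, v⟫ with hiOv
  clear_value iPO iPv iOv
  linear_combination (norm := (field_simp; ring)) (τ / s ^ 2) * hEkey2
end

section
/- (Intersecting Gyrosecants Theorem.) Let O ∈ 𝔹, 0 < R < s, and let A2, A3, B2, B3 ∈ 𝔹 satisfy |OA2| = |OA3| = |OB2| = |OB3| = R with A2 ≠ A3 and B2 ≠ B3. Let P ∈ 𝔹 be a point such that A2 lies strictly between P and A3 on the Euclidean segment from P to A3, and B2 lies strictly between P and B3 on the Euclidean segment from P to B3. Then γ_{|PA2|}·|PA2| · γ_{|PA3|}·|PA3| / (γ_{|A2A3|} + 1) = γ_{|PB2|}·|PB2| · γ_{|PB3|}·|PB3| / (γ_{|B2B3|} + 1). -/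
open RealInnerProductSpace

/-!
The Einstein ball is the Beltrami–Klein model: lifting `u` to `(1, u / s)` and writing `B` for the
Minkowski product of lifts, `γ_{|uv|} = B(u, v) / √(B(u, u) B(v, v))` and
`(γ_{|uv|} |uv| / s)² = γ_{|uv|}² - 1`. Hence, for `A2 = (1 - r) P + r A3`, the secant product is
`s² r (B(P, A3)² - B(P, P) B(A3, A3)) / (B(P, P) (B(A2, A3) + √(B(A2, A2) B(A3, A3))))`.
The gyrocircle `|OA| = R` is the quadric `(1 - R²/s²) B(O, A)² = B(O, O) B(A, A)`, which meets the
chord through `P` at `A2` and `A3`. Polarizing it along the chord, as for the Euclidean power of a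
point, eliminates `A2` and `A3` and leaves
`s² ((1 - R²/s²) B(O, P)² - B(O, O) B(P, P)) / (2 B(O, O) B(P, P))`, which depends on `P` alone.
-/

section MinkowskiForm

variable {E : Type*} [NormedAddCommGroup E] [InnerProductSpace ℝ E]

/-- The Minkowski product of the lifts `(1, u / s)` and `(1, v / s)` to `ℝ × E`. -/
noncomputable def minkowskiForm (s : ℝ) (u v : E) : ℝ := 1 - ⟪u, v⟫ / s ^ 2

theorem minkowskiForm_comm (s : ℝ) (u v : E) : minkowskiForm s u v = minkowskiForm s v u := by
  rw [minkowskiForm, minkowskiForm, real_inner_comm]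

theorem minkowskiForm_self (s : ℝ) (u : E) : minkowskiForm s u u = 1 - ‖u‖ ^ 2 / s ^ 2 := by
  rw [minkowskiForm, real_inner_self_eq_norm_sq]

theorem inner_eq_minkowskiForm {s : ℝ} (hs : s ≠ 0) (u v : E) :
    ⟪u, v⟫ = s ^ 2 * (1 - minkowskiForm s u v) := by
  rw [minkowskiForm]; field_simp; ring

theorem norm_sq_eq_minkowskiForm {s : ℝ} (hs : s ≠ 0) (u : E) :
    ‖u‖ ^ 2 = s ^ 2 * (1 - minkowskiForm s u u) := by
  rw [← real_inner_self_eq_norm_sq, inner_eq_minkowskiForm hs]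

theorem minkowskiForm_pos {s : ℝ} {u v : E} (hu : ‖u‖ < s) (hv : ‖v‖ < s) :
    0 < minkowskiForm s u v := by
  have hs : 0 < s := (norm_nonneg u).trans_lt hu
  rw [minkowskiForm, sub_pos, div_lt_one (by positivity)]
  calc ⟪u, v⟫ ≤ ‖u‖ * ‖v‖ := real_inner_le_norm u v
    _ < s * s := mul_lt_mul'' hu hv (norm_nonneg u) (norm_nonneg v)
    _ = s ^ 2 := (sq s).symm

theorem minkowskiForm_lineMap_right (s : ℝ) (u x y : E) (r : ℝ) :
    minkowskiForm s u (AffineMap.lineMap x y r) =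
      (1 - r) * minkowskiForm s u x + r * minkowskiForm s u y := by
  simp only [minkowskiForm, AffineMap.lineMap_apply_module, inner_add_right,
    real_inner_smul_right]
  ring

theorem minkowskiForm_lineMap_left (s : ℝ) (x y u : E) (r : ℝ) :
    minkowskiForm s (AffineMap.lineMap x y r) u =
      (1 - r) * minkowskiForm s x u + r * minkowskiForm s y u := by
  rw [minkowskiForm_comm, minkowskiForm_lineMap_right, minkowskiForm_comm s u x,
    minkowskiForm_comm s u y]

theorem minkowskiForm_lineMap_self (s : ℝ) (x y : E) (r : ℝ) :
    minkowskiForm s (AffineMap.lineMap x y r) (AffineMap.lineMap x y r) =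
      (1 - r) ^ 2 * minkowskiForm s x x + 2 * r * (1 - r) * minkowskiForm s x y +
        r ^ 2 * minkowskiForm s y y := by
  rw [minkowskiForm_lineMap_left, minkowskiForm_lineMap_right, minkowskiForm_lineMap_right,
    minkowskiForm_comm s y x]
  ring

theorem minkowskiForm_discr_lineMap (s : ℝ) (x y : E) (r : ℝ) :
    minkowskiForm s x (AffineMap.lineMap x y r) ^ 2 -
        minkowskiForm s x x * minkowskiForm s (AffineMap.lineMap x y r) (AffineMap.lineMap x y r) =
      r ^ 2 * (minkowskiForm s x y ^ 2 - minkowskiForm s x x * minkowskiForm s y y) := by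
  rw [minkowskiForm_lineMap_right, minkowskiForm_lineMap_self]
  ring

end MinkowskiForm

section EinsteinGyrodistance

variable {n : ℕ} {s : ℝ} {u v : EuclideanSpace ℝ (Fin n)}

theorem eadd_neg_eq (hu : ‖u‖ < s) (hv : ‖v‖ < s) :
    eadd s (-u) v = (1 / minkowskiForm s u v) •
      ((⟪u, v⟫ / s ^ 2 / (√(minkowskiForm s u u) + 1) - 1) • u + √(minkowskiForm s u u) • v) := by
  have hs : s ≠ 0 := ((norm_nonneg u).trans_lt hu).ne'
  have hc : 0 < √(minkowskiForm s u u) := Real.sqrt_pos.mpr (minkowskiForm_pos hu hu)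
  have hm := (minkowskiForm_pos hu hv).ne'
  have hgamma : egamma s (-u) = 1 / √(minkowskiForm s u u) := by
    rw [egamma, norm_neg, minkowskiForm_self]
  rw [eadd, hgamma, inner_neg_left, inner_eq_minkowskiForm hs]
  generalize √(minkowskiForm s u u) = c at hc ⊢
  generalize minkowskiForm s u v = m at hm ⊢
  rw [show 1 + -(s ^ 2 * (1 - m)) / s ^ 2 = m by field_simp; ring]
  match_scalars
  · field_simp
    ring
  · field_simp

theorem norm_eadd_neg_sq_mul_minkowskiForm_sq (hu : ‖u‖ < s) (hv : ‖v‖ < s) :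
    ‖eadd s (-u) v‖ ^ 2 * minkowskiForm s u v ^ 2 =
      s ^ 2 * (minkowskiForm s u v ^ 2 - minkowskiForm s u u * minkowskiForm s v v) := by
  have hs : s ≠ 0 := ((norm_nonneg u).trans_lt hu).ne'
  have hc : 0 < √(minkowskiForm s u u) := Real.sqrt_pos.mpr (minkowskiForm_pos hu hu)
  have hc2 := Real.sq_sqrt (minkowskiForm_pos hu hu).le
  have hm := (minkowskiForm_pos hu hv).ne'
  simp only [eadd_neg_eq hu hv, norm_smul, mul_pow, norm_add_sq_real, real_inner_smul_left,
    real_inner_smul_right, Real.norm_eq_abs, sq_abs]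
  rw [inner_eq_minkowskiForm hs, norm_sq_eq_minkowskiForm hs u, norm_sq_eq_minkowskiForm hs v]
  generalize √(minkowskiForm s u u) = c at hc hc2 ⊢
  rw [← hc2]
  generalize minkowskiForm s u v = m at hm ⊢
  field_simp
  ring

theorem minkowskiForm_mul_le_sq (hu : ‖u‖ < s) (hv : ‖v‖ < s) :
    minkowskiForm s u u * minkowskiForm s v v ≤ minkowskiForm s u v ^ 2 := by
  have hs : 0 < s := (norm_nonneg u).trans_lt hu
  have h := norm_eadd_neg_sq_mul_minkowskiForm_sq hu hv
  have : 0 ≤ s ^ 2 * (minkowskiForm s u v ^ 2 - minkowskiForm s u u * minkowskiForm s v v) :=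
    h ▸ by positivity
  exact sub_nonneg.mp (nonneg_of_mul_nonneg_right this (by positivity))

theorem one_sub_norm_eadd_neg_sq (hu : ‖u‖ < s) (hv : ‖v‖ < s) :
    1 - ‖eadd s (-u) v‖ ^ 2 / s ^ 2 =
      minkowskiForm s u u * minkowskiForm s v v / minkowskiForm s u v ^ 2 := by
  have hs : s ≠ 0 := ((norm_nonneg u).trans_lt hu).ne'
  have hm := (minkowskiForm_pos hu hv).ne'
  have h := norm_eadd_neg_sq_mul_minkowskiForm_sq hu hv
  field_simp
  linear_combination -h

theorem gammaR_norm_eadd_neg (hu : ‖u‖ < s) (hv : ‖v‖ < s) :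
    gammaR s ‖eadd s (-u) v‖ =
      minkowskiForm s u v / √(minkowskiForm s u u * minkowskiForm s v v) := by
  rw [gammaR, one_sub_norm_eadd_neg_sq hu hv, Real.sqrt_div' _ (sq_nonneg _),
    Real.sqrt_sq (minkowskiForm_pos hu hv).le, one_div_div]

theorem gammaR_mul_norm_eadd_neg (hu : ‖u‖ < s) (hv : ‖v‖ < s) :
    gammaR s ‖eadd s (-u) v‖ * ‖eadd s (-u) v‖ =
      s * √(minkowskiForm s u v ^ 2 - minkowskiForm s u u * minkowskiForm s v v) /
        √(minkowskiForm s u u * minkowskiForm s v v) := by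
  have hs : 0 < s := (norm_nonneg u).trans_lt hu
  have hm := minkowskiForm_pos hu hv
  have h : minkowskiForm s u v * ‖eadd s (-u) v‖ =
      s * √(minkowskiForm s u v ^ 2 - minkowskiForm s u u * minkowskiForm s v v) := by
    rw [← Real.sqrt_sq (by positivity : 0 ≤ minkowskiForm s u v * ‖eadd s (-u) v‖), mul_pow,
      mul_comm, norm_eadd_neg_sq_mul_minkowskiForm_sq hu hv, Real.sqrt_mul (sq_nonneg s),
      Real.sqrt_sq hs.le]
  rw [gammaR_norm_eadd_neg hu hv, div_mul_eq_mul_div, h]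

end EinsteinGyrodistance

/-- With `ℓ = B(O, ·)`, `c, d = ℓ(P), ℓ(A)` and `p, a, b = B(P, P), B(P, A), B(A, A)`: the form
`k ℓ² - o B` vanishes at `A` and at `(1 - r) P + r A`, so its polar value at `(P, A)` is fixed by
its value at `P`. -/
theorem power_of_point_identity {k o p a b c d r : ℝ} (hr : r ≠ 1) (hd : k * d ^ 2 = o * b)
    (he : k * ((1 - r) * c + r * d) ^ 2 =
      o * ((1 - r) ^ 2 * p + 2 * r * (1 - r) * a + r ^ 2 * b)) :
    2 * r * (a ^ 2 - p * b) * o ^ 2 =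
      (k * c ^ 2 - o * p) * (o * ((1 - r) * a + r * b) + k * ((1 - r) * c + r * d) * d) := by
  have hpolar : 2 * r * (k * c * d - o * a) = (r - 1) * (k * c ^ 2 - o * p) := by
    have h : (1 - r) * ((1 - r) * (k * c ^ 2 - o * p) + 2 * r * (k * c * d - o * a)) = 0 := by
      linear_combination he - r ^ 2 * hd
    linear_combination (mul_eq_zero.mp h).resolve_left (sub_ne_zero.mpr hr.symm)
  linear_combination (-o * a - k * c * d) * hpolar + r * (o * p + k * c ^ 2) * hd

section Gyrosecant

variable {n : ℕ} {s : ℝ} {O P A2 A3 : EuclideanSpace ℝ (Fin n)}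

theorem gyrosecant_product_eq (hP : ‖P‖ < s) (hA2 : ‖A2‖ < s) (hA3 : ‖A3‖ < s) {r : ℝ}
    (hr : 0 < r) (hA2_eq : AffineMap.lineMap P A3 r = A2) :
    gammaR s ‖eadd s (-P) A2‖ * ‖eadd s (-P) A2‖ *
        (gammaR s ‖eadd s (-P) A3‖ * ‖eadd s (-P) A3‖) / (gammaR s ‖eadd s (-A2) A3‖ + 1) =
      s ^ 2 * r * (minkowskiForm s P A3 ^ 2 - minkowskiForm s P P * minkowskiForm s A3 A3) /
        (minkowskiForm s P P *
          (minkowskiForm s A2 A3 + √(minkowskiForm s A2 A2 * minkowskiForm s A3 A3))) := by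
  have hdiscr := minkowskiForm_discr_lineMap s P A3 r
  rw [hA2_eq] at hdiscr
  have hΔ := sub_nonneg.mpr (minkowskiForm_mul_le_sq hP hA3)
  have hPP := minkowskiForm_pos hP hP
  have h22 := Real.sqrt_pos.mpr (minkowskiForm_pos hA2 hA2)
  have h33 := Real.sqrt_pos.mpr (minkowskiForm_pos hA3 hA3)
  have h23 := minkowskiForm_pos hA2 hA3
  rw [gammaR_mul_norm_eadd_neg hP hA2, gammaR_mul_norm_eadd_neg hP hA3,
    gammaR_norm_eadd_neg hA2 hA3, hdiscr, Real.sqrt_mul (sq_nonneg r), Real.sqrt_sq hr.le,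
    Real.sqrt_mul hPP.le, Real.sqrt_mul hPP.le, Real.sqrt_mul (minkowskiForm_pos hA2 hA2).le]
  have hP' := Real.sqrt_pos.mpr hPP
  field_simp
  rw [Real.sq_sqrt hΔ, Real.sq_sqrt hPP.le]
  ring

theorem mul_minkowskiForm_sq_of_norm_eadd_neg_eq (hO : ‖O‖ < s) (hA : ‖A2‖ < s) {R : ℝ}
    (hR : ‖eadd s (-O) A2‖ = R) :
    (1 - R ^ 2 / s ^ 2) * minkowskiForm s O A2 ^ 2 =
      minkowskiForm s O O * minkowskiForm s A2 A2 := by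
  rw [← hR, one_sub_norm_eadd_neg_sq hO hA,
    div_mul_cancel₀ _ (pow_ne_zero 2 (minkowskiForm_pos hO hA).ne')]

theorem sqrt_minkowskiForm_mul_eq_of_norm_eadd_neg_eq (hO : ‖O‖ < s) (hA2 : ‖A2‖ < s)
    (hA3 : ‖A3‖ < s) {R : ℝ} (hRA2 : ‖eadd s (-O) A2‖ = R) (hRA3 : ‖eadd s (-O) A3‖ = R) :
    √(minkowskiForm s A2 A2 * minkowskiForm s A3 A3) =
      (1 - R ^ 2 / s ^ 2) * minkowskiForm s O A2 * minkowskiForm s O A3 /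
        minkowskiForm s O O := by
  have hK2 := mul_minkowskiForm_sq_of_norm_eadd_neg_eq hO hA2 hRA2
  have hK3 := mul_minkowskiForm_sq_of_norm_eadd_neg_eq hO hA3 hRA3
  generalize 1 - R ^ 2 / s ^ 2 = K at hK2 hK3 ⊢
  have hOO := minkowskiForm_pos hO hO
  have hO2 := minkowskiForm_pos hO hA2
  have hO3 := minkowskiForm_pos hO hA3
  have hK : 0 < K := by
    have h := mul_pos hOO (minkowskiForm_pos hA2 hA2)
    rw [← hK2] at h
    exact pos_of_mul_pos_left h (sq_nonneg _)
  rw [Real.sqrt_eq_iff_mul_self_eq_of_pos (by positivity)]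
  field_simp
  linear_combination (minkowskiForm s O O * minkowskiForm s A3 A3) * hK2 +
    (K * minkowskiForm s O A2 ^ 2) * hK3

noncomputable def gyropower (s : ℝ) (O : EuclideanSpace ℝ (Fin n)) (R : ℝ)
    (P : EuclideanSpace ℝ (Fin n)) : ℝ :=
  s ^ 2 * ((1 - R ^ 2 / s ^ 2) * minkowskiForm s O P ^ 2 -
      minkowskiForm s O O * minkowskiForm s P P) /
    (2 * (minkowskiForm s O O * minkowskiForm s P P))

theorem gyrosecant_product_eq_gyropower (hO : ‖O‖ < s) (hP : ‖P‖ < s) (hA2 : ‖A2‖ < s)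
    (hA3 : ‖A3‖ < s) {R : ℝ} (hRA2 : ‖eadd s (-O) A2‖ = R) (hRA3 : ‖eadd s (-O) A3‖ = R)
    (hbtw : Sbtw ℝ P A2 A3) :
    gammaR s ‖eadd s (-P) A2‖ * ‖eadd s (-P) A2‖ *
        (gammaR s ‖eadd s (-P) A3‖ * ‖eadd s (-P) A3‖) / (gammaR s ‖eadd s (-A2) A3‖ + 1) =
      gyropower s O R P := by
  obtain ⟨⟨r, ⟨hr0, -⟩, hA2_eq⟩, hA2P, hA2A3⟩ := hbtw
  have hr_pos : 0 < r := hr0.lt_of_ne' (by rintro rfl; simp [← hA2_eq] at hA2P)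
  have hr_ne : r ≠ 1 := by rintro rfl; simp [← hA2_eq] at hA2A3
  have hO2 : minkowskiForm s O A2 = (1 - r) * minkowskiForm s O P + r * minkowskiForm s O A3 :=
    hA2_eq ▸ minkowskiForm_lineMap_right s O P A3 r
  have h22 : minkowskiForm s A2 A2 = (1 - r) ^ 2 * minkowskiForm s P P +
      2 * r * (1 - r) * minkowskiForm s P A3 + r ^ 2 * minkowskiForm s A3 A3 :=
    hA2_eq ▸ minkowskiForm_lineMap_self s P A3 r
  have h23 : minkowskiForm s A2 A3 =
      (1 - r) * minkowskiForm s P A3 + r * minkowskiForm s A3 A3 :=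
    hA2_eq ▸ minkowskiForm_lineMap_left s P A3 A3 r
  have key := power_of_point_identity hr_ne
    (mul_minkowskiForm_sq_of_norm_eadd_neg_eq hO hA3 hRA3)
    (by rw [← hO2, ← h22]; exact mul_minkowskiForm_sq_of_norm_eadd_neg_eq hO hA2 hRA2)
  rw [← h23, ← hO2] at key
  have hOO := minkowskiForm_pos hO hO
  have hPP := minkowskiForm_pos hP hP
  have hm23 := minkowskiForm_pos hA2 hA3
  rw [gyrosecant_product_eq hP hA2 hA3 hr_pos hA2_eq, gyropower,
    div_eq_div_iff (by positivity) (by positivity),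
    sqrt_minkowskiForm_mul_eq_of_norm_eadd_neg_eq hO hA2 hA3 hRA2 hRA3]
  generalize 1 - R ^ 2 / s ^ 2 = K at key ⊢
  field_simp
  linear_combination s ^ 2 * key

end Gyrosecant

theorem intersecting_gyrosecants_general {n : ℕ} (s : ℝ)
    (O A2 A3 B2 B3 P : EuclideanSpace ℝ (Fin n)) (hO : ‖O‖ < s)
    (R : ℝ)
    (hA2 : ‖A2‖ < s) (hA3 : ‖A3‖ < s) (hB2 : ‖B2‖ < s) (hB3 : ‖B3‖ < s)
    (hP : ‖P‖ < s)
    (hRA2 : ‖eadd s (-O) A2‖ = R) (hRA3 : ‖eadd s (-O) A3‖ = R)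
    (hRB2 : ‖eadd s (-O) B2‖ = R) (hRB3 : ‖eadd s (-O) B3‖ = R)
    (hbtwA : Sbtw ℝ P A2 A3) (hbtwB : Sbtw ℝ P B2 B3)
    (dA2 dA3 dB2 dB3 dA dB : ℝ)
    (hdA2 : dA2 = ‖eadd s (-P) A2‖) (hdA3 : dA3 = ‖eadd s (-P) A3‖)
    (hdB2 : dB2 = ‖eadd s (-P) B2‖) (hdB3 : dB3 = ‖eadd s (-P) B3‖)
    (hdA : dA = ‖eadd s (-A2) A3‖) (hdB : dB = ‖eadd s (-B2) B3‖) :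
    gammaR s dA2 * dA2 * (gammaR s dA3 * dA3) / (gammaR s dA + 1) =
      gammaR s dB2 * dB2 * (gammaR s dB3 * dB3) / (gammaR s dB + 1) := by
  subst hdA2 hdA3 hdB2 hdB3 hdA hdB
  rw [gyrosecant_product_eq_gyropower hO hP hA2 hA3 hRA2 hRA3 hbtwA,
    gyrosecant_product_eq_gyropower hO hP hB2 hB3 hRB2 hRB3 hbtwB]

/-- **Intersecting Gyrosecants Theorem.** -/
theorem intersecting_gyrosecants {n : ℕ} (hn : 2 ≤ n) (s : ℝ) (hs : 0 < s)
    (O A2 A3 B2 B3 P : EuclideanSpace ℝ (Fin n)) (hO : ‖O‖ < s)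
    (R : ℝ) (hRpos : 0 < R) (hRs : R < s)
    (hA2 : ‖A2‖ < s) (hA3 : ‖A3‖ < s) (hB2 : ‖B2‖ < s) (hB3 : ‖B3‖ < s)
    (hP : ‖P‖ < s)
    (hRA2 : ‖eadd s (-O) A2‖ = R) (hRA3 : ‖eadd s (-O) A3‖ = R)
    (hRB2 : ‖eadd s (-O) B2‖ = R) (hRB3 : ‖eadd s (-O) B3‖ = R)
    (hA : A2 ≠ A3) (hB : B2 ≠ B3)
    (hbtwA : Sbtw ℝ P A2 A3) (hbtwB : Sbtw ℝ P B2 B3)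
    (dA2 dA3 dB2 dB3 dA dB : ℝ)
    (hdA2 : dA2 = ‖eadd s (-P) A2‖) (hdA3 : dA3 = ‖eadd s (-P) A3‖)
    (hdB2 : dB2 = ‖eadd s (-P) B2‖) (hdB3 : dB3 = ‖eadd s (-P) B3‖)
    (hdA : dA = ‖eadd s (-A2) A3‖) (hdB : dB = ‖eadd s (-B2) B3‖) :
    gammaR s dA2 * dA2 * (gammaR s dA3 * dA3) / (gammaR s dA + 1) =
      gammaR s dB2 * dB2 * (gammaR s dB3 * dB3) / (gammaR s dB + 1) :=
  intersecting_gyrosecants_general s O A2 A3 B2 B3 P hO R hA2 hA3 hB2 hB3 hP hRA2 hRA3 hRB2 hRB3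
    hbtwA hbtwB dA2 dA3 dB2 dB3 dA dB hdA2 hdA3 hdB2 hdB3 hdA hdB
end
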